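/- Let n ≥ 0 and r ≥ 2 be integers. Then the total number of different part sizes in all partitions of n with no part repeated more than r−1 times equals the number of pairs (μ, i) with i ≥ 1 an integer and μ an r-flat partition of n − i satisfying μ_i − μ_{i+1} < r−1 (where μ_j = 0 for j greater than the number of parts of μ): Σ_{λ∈D_r(n)} ℓ̄(λ) = #{(μ, i) : i ≥ 1, μ ∈ F_r(n − i), μ_i − μ_{i+1} < r−1}. -/

import Mathlib

/-!
Conjugation is an involution on partitions of `m` under which the multiplicity of `s` in `κ`
becomes the difference `μ_s − μ_{s+1}` of the conjugate `μ`; hence it exchanges `D_r(m)` and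
`F_r(m)`. A pair `(λ, s)` with `λ ∈ D_r(n)` and `s` a part size of `λ` is the same as the
partition `κ = λ ∖ {s} ∈ D_r(n − s)`, in which `s` occurs fewer than `r − 1` times, together
with `s`; conjugating `κ` turns this into a pair `(μ, s)` counted on the right-hand side.
-/

open scoped Classical

namespace BeckPaper

/-- The parts of a partition, sorted in non-increasing order. -/
def partsList {n : ℕ} (p : n.Partition) : List ℕ := p.parts.sort (· ≥ ·)

/-- The `i`-th part of a partition (`1`-indexed); `0` if `i` exceeds the number of parts. -/
def part {n : ℕ} (p : n.Partition) (i : ℕ) : ℕ := (partsList p).getD (i - 1) 0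

/-- `ℓ(λ)`: the number of parts of `λ`. -/
def numParts {n : ℕ} (p : n.Partition) : ℕ := Multiset.card p.parts

/-- `ℓ_t(λ)`: the number of parts of `λ` congruent to `t` modulo `r`. -/
def lMod (r t : ℕ) {n : ℕ} (p : n.Partition) : ℕ :=
  Multiset.card (p.parts.filter (fun x => x % r = t % r))

/-- `ℓ̄_t(λ)`: the number of different part sizes appearing at least `t` times in `λ`. -/
def lRep (t : ℕ) {n : ℕ} (p : n.Partition) : ℕ :=
  (p.parts.toFinset.filter (fun s => t ≤ p.parts.count s)).card

/-- `ℓ̄(λ)`: the number of different part sizes of `λ`. -/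
def lDist {n : ℕ} (p : n.Partition) : ℕ := p.parts.toFinset.card

/-- `d_t(λ)`: the number of indices `1 ≤ i ≤ ℓ(λ)` with `λ_i − λ_{i+1} ≥ t`. -/
def dCount (t : ℕ) {n : ℕ} (p : n.Partition) : ℕ :=
  ((Finset.Icc 1 (numParts p)).filter (fun i => t ≤ part p i - part p (i + 1))).card

/-- `λ ∈ O_r(n)`: no part is divisible by `r`. -/
def IsRegular (r : ℕ) {n : ℕ} (p : n.Partition) : Prop := ∀ x ∈ p.parts, ¬ r ∣ x

/-- `λ ∈ D_r(n)`: no part appears more than `r − 1` times. -/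
def IsRestricted (r : ℕ) {n : ℕ} (p : n.Partition) : Prop :=
  ∀ s : ℕ, p.parts.count s ≤ r - 1

/-- `λ ∈ F_r(n)`: all differences of consecutive parts (with `λ_{k+1} = 0`) are `≤ r − 1`. -/
def IsFlat (r : ℕ) {n : ℕ} (p : n.Partition) : Prop :=
  ∀ i, 1 ≤ i → i ≤ numParts p → part p i - part p (i + 1) ≤ r - 1

/-- `λ ∈ O_{1,r}(n)`: the set of part sizes divisible by `r` has exactly one element. -/
def IsOneRegular (r : ℕ) {n : ℕ} (p : n.Partition) : Prop :=
  (p.parts.toFinset.filter (fun s => r ∣ s)).card = 1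

/-- `λ ∈ D_{1,r}(n)`: exactly one part size appears at least `r` times. -/
def IsOneRestricted (r : ℕ) {n : ℕ} (p : n.Partition) : Prop :=
  (p.parts.toFinset.filter (fun s => r ≤ p.parts.count s)).card = 1

/-- `λ ∈ F_{1,r}(n)`: exactly one difference of consecutive parts is `≥ r`, and all
other such differences are `≤ r − 1`. -/
def IsOneFlat (r : ℕ) {n : ℕ} (p : n.Partition) : Prop :=
  ∃ i, (1 ≤ i ∧ i ≤ numParts p ∧ r ≤ part p i - part p (i + 1)) ∧
    ∀ j, 1 ≤ j → j ≤ numParts p → j ≠ i → part p j - part p (j + 1) ≤ r - 1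

/-- `λ ∈ T_r(n)`: exactly one part size has multiplicity at least `r`, and that
multiplicity is strictly less than `2r`. -/
def IsInT (r : ℕ) {n : ℕ} (p : n.Partition) : Prop :=
  ∃ s : ℕ, (r ≤ p.parts.count s ∧ p.parts.count s < 2 * r) ∧
    ∀ s' : ℕ, r ≤ p.parts.count s' → s' = s

lemma _root_.Multiset.count_add_countP_succ_le (m : Multiset ℕ) (s : ℕ) :
    m.count s + m.countP (s + 1 ≤ ·) = m.countP (s ≤ ·) := by
  induction m using Multiset.induction with
  | empty => simp
  | cons a m ih =>
    simp only [Multiset.count_cons, Multiset.countP_cons]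
    split_ifs <;> omega

lemma _root_.Multiset.sum_range_countP_succ_le {s : Multiset ℕ} {M : ℕ} (hs : ∀ x ∈ s, x ≤ M) :
    ∑ k ∈ Finset.range M, s.countP (k + 1 ≤ ·) = s.sum := by
  induction s using Multiset.induction with
  | empty => simp
  | cons a s ih =>
    have ha : (Finset.range M).filter (· + 1 ≤ a) = Finset.range a := by
      have := hs a (Multiset.mem_cons_self a s)
      ext k; simp only [Finset.mem_filter, Finset.mem_range]; omega
    simp only [Multiset.countP_cons, Finset.sum_add_distrib, Finset.sum_boole, ha,
      Finset.card_range, Nat.cast_id, Multiset.sum_cons, ih fun x hx => hs x (by simp [hx])]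
    omega

lemma _root_.List.le_getD_iff_lt_countP {L : List ℕ} (hL : L.Pairwise (· ≥ ·)) {i : ℕ} (hi : 0 < i)
    (j : ℕ) : i ≤ L.getD j 0 ↔ j < L.countP (i ≤ ·) := by
  induction L generalizing j with
  | nil => simp; omega
  | cons a t ih =>
    obtain ⟨ha, ht⟩ := List.pairwise_cons.mp hL
    by_cases hai : i ≤ a
    · cases j with
      | zero => simp [hai]
      | succ j => rw [List.getD_cons_succ, ih ht j, List.countP_cons]; simp [hai]
    · have ht0 : t.countP (i ≤ ·) = 0 :=
        List.countP_eq_zero.mpr fun b hb => by have := ha b hb; simp; omega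
      cases j with
      | zero => simp [hai, ht0]
      | succ j => rw [List.getD_cons_succ, ih ht j, List.countP_cons]; simp [hai, ht0]

def numPartsGe {n : ℕ} (p : n.Partition) (i : ℕ) : ℕ := p.parts.countP (i ≤ ·)

lemma coe_partsList {n : ℕ} (p : n.Partition) : (partsList p : Multiset ℕ) = p.parts :=
  Multiset.sort_eq _ _

lemma le_part_iff {n : ℕ} (p : n.Partition) {i j : ℕ} (hi : 0 < i) (hj : 0 < j) :
    i ≤ part p j ↔ j ≤ numPartsGe p i := by
  rw [part, List.le_getD_iff_lt_countP (L := partsList p) (Multiset.pairwise_sort _ _) hi,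
    numPartsGe, ← coe_partsList, Multiset.coe_countP]
  omega

lemma le_part_one_of_mem {n : ℕ} (p : n.Partition) {x : ℕ} (hx : x ∈ p.parts) : x ≤ part p 1 :=
  (le_part_iff p (p.parts_pos hx) one_pos).mpr (Multiset.countP_pos.mpr ⟨x, hx, le_rfl⟩)

lemma part_le_part_one {n : ℕ} (p : n.Partition) {i : ℕ} (hi : 0 < i) : part p i ≤ part p 1 := by
  rcases Nat.eq_zero_or_pos (part p i) with h | h
  · omega
  · exact (le_part_iff p h one_pos).mpr (le_trans hi ((le_part_iff p h hi).mp le_rfl))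

lemma part_eq_zero_of_numParts_lt {n : ℕ} (p : n.Partition) {i : ℕ} (hi : numParts p < i) :
    part p i = 0 := by
  by_contra h
  have := (le_part_iff p one_pos (by omega)).mp (Nat.pos_of_ne_zero h)
  have := Multiset.countP_le_card (1 ≤ ·) p.parts
  simp only [numPartsGe, numParts] at *
  omega

def conj {n : ℕ} (p : n.Partition) : n.Partition where
  parts := (Multiset.range (part p 1)).map fun k => numPartsGe p (k + 1)
  parts_pos {x} hx := by
    obtain ⟨k, hk, rfl⟩ := Multiset.mem_map.mp hx
    exact (le_part_iff p k.succ_pos one_pos).mp (Multiset.mem_range.mp hk)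
  parts_sum :=
    (Multiset.sum_range_countP_succ_le fun x hx => le_part_one_of_mem p hx).trans p.parts_sum

lemma numPartsGe_conj {n : ℕ} (p : n.Partition) {i : ℕ} (hi : 0 < i) :
    numPartsGe (conj p) i = part p i := by
  have hfilter : (Multiset.range (part p 1)).filter (fun k => i ≤ numPartsGe p (k + 1)) =
      Multiset.range (part p i) := by
    refine (Multiset.nodup_range _).filter _ |>.ext (Multiset.nodup_range _) |>.mpr fun k => ?_
    have := part_le_part_one p hi
    rw [Multiset.mem_filter, Multiset.mem_range, Multiset.mem_range,
      ← le_part_iff p k.succ_pos hi]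
    omega
  rw [numPartsGe, conj, Multiset.countP_map, hfilter, Multiset.card_range]

lemma part_conj {n : ℕ} (p : n.Partition) {j : ℕ} (hj : 0 < j) :
    part (conj p) j = numPartsGe p j := by
  refine eq_of_forall_le_iff fun k => ?_
  rcases Nat.eq_zero_or_pos k with rfl | hk
  · simp
  · rw [le_part_iff _ hk hj, numPartsGe_conj p hk, le_part_iff p hj hk]

lemma count_eq_numPartsGe_sub {n : ℕ} (p : n.Partition) (s : ℕ) :
    p.parts.count s = numPartsGe p s - numPartsGe p (s + 1) := by
  have := p.parts.count_add_countP_succ_le s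
  rw [numPartsGe, numPartsGe]
  omega

lemma count_conj {n : ℕ} (p : n.Partition) {s : ℕ} (hs : 0 < s) :
    (conj p).parts.count s = part p s - part p (s + 1) := by
  rw [count_eq_numPartsGe_sub, numPartsGe_conj p hs, numPartsGe_conj p s.succ_pos]

lemma conj_conj {n : ℕ} (p : n.Partition) : conj (conj p) = p := by
  refine Nat.Partition.ext (Multiset.ext.mpr fun s => ?_)
  rcases Nat.eq_zero_or_pos s with rfl | hs
  · rw [Multiset.count_eq_zero_of_notMem (fun h => ((conj (conj p)).parts_pos h).false),
      Multiset.count_eq_zero_of_notMem (fun h => (p.parts_pos h).false)]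
  · rw [count_conj _ hs, part_conj p hs, part_conj p s.succ_pos, count_eq_numPartsGe_sub]

lemma isFlat_iff_isRestricted_conj {r n : ℕ} (μ : n.Partition) :
    IsFlat r μ ↔ IsRestricted r (conj μ) := by
  refine ⟨fun h s => ?_, fun h i hi _ => count_conj μ hi ▸ h i⟩
  rcases Nat.eq_zero_or_pos s with rfl | hs
  · rw [Multiset.count_eq_zero_of_notMem (fun h => ((conj μ).parts_pos h).false)]
    exact Nat.zero_le _
  rw [count_conj μ hs]
  by_cases hsμ : s ≤ numParts μ
  · exact h s hs hsμ
  · rw [part_eq_zero_of_numParts_lt μ (by omega)]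
    omega

lemma _root_.Multiset.forall_count_cons_le_iff {α : Type*} [DecidableEq α] {s : Multiset α} {a : α}
    {k : ℕ} : (∀ b, (a ::ₘ s).count b ≤ k) ↔ (∀ b, s.count b ≤ k) ∧ s.count a < k := by
  refine ⟨fun h => ⟨fun b => ?_, ?_⟩, fun ⟨h, ha⟩ b => ?_⟩
  · exact (Multiset.count_le_of_le b (Multiset.le_cons_self s a)).trans (h b)
  · simpa using h a
  · rw [Multiset.count_cons]
    split_ifs with hb
    · subst hb; omega
    · simpa using h b

def consPart {m n i : ℕ} (κ : m.Partition) (hi : 0 < i) (h : m + i = n) : n.Partition where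
  parts := i ::ₘ κ.parts
  parts_pos hx := (Multiset.mem_cons.mp hx).elim (· ▸ hi) κ.parts_pos
  parts_sum := by rw [Multiset.sum_cons, κ.parts_sum]; omega

def erasePart {n s : ℕ} (p : n.Partition) (hs : s ∈ p.parts) : (n - s).Partition where
  parts := p.parts.erase s
  parts_pos hx := p.parts_pos (Multiset.mem_of_mem_erase hx)
  parts_sum := by have := Multiset.sum_erase hs; rw [p.parts_sum] at this; omega

lemma sigma_partition_prod_ext {x y : Σ m : ℕ, m.Partition × ℕ} (h₁ : x.2.1.parts = y.2.1.parts)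
    (h₂ : x.2.2 = y.2.2) : x = y := by
  obtain ⟨m, κ, i⟩ := x
  obtain ⟨m', κ', i'⟩ := y
  obtain rfl : m = m' := by rw [← κ.parts_sum, ← κ'.parts_sum, h₁]
  obtain rfl := Nat.Partition.ext h₁
  obtain rfl : i = i' := h₂
  rfl

def addPartEquiv (r n : ℕ) :
    {x : Σ m : ℕ, m.Partition × ℕ //
      IsRestricted r x.2.1 ∧ 0 < x.2.2 ∧ x.1 + x.2.2 = n ∧ x.2.1.parts.count x.2.2 < r - 1} ≃
      {y : Σ _ : n.Partition, ℕ // IsRestricted r y.1 ∧ y.2 ∈ y.1.parts} where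
  toFun x := ⟨⟨consPart x.1.2.1 x.2.2.1 x.2.2.2.1, x.1.2.2⟩,
    Multiset.forall_count_cons_le_iff.mpr ⟨x.2.1, x.2.2.2.2⟩, Multiset.mem_cons_self _ _⟩
  invFun y :=
    have hcons : ∀ b, (y.1.2 ::ₘ y.1.1.parts.erase y.1.2).count b ≤ r - 1 := by
      rw [Multiset.cons_erase y.2.2]; exact y.2.1
    ⟨⟨n - y.1.2, erasePart y.1.1 y.2.2, y.1.2⟩,
      (Multiset.forall_count_cons_le_iff.mp hcons).1, y.1.1.parts_pos y.2.2,
      Nat.sub_add_cancel (Multiset.le_sum_of_mem y.2.2 |>.trans_eq y.1.1.parts_sum),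
      (Multiset.forall_count_cons_le_iff.mp hcons).2⟩
  left_inv x := Subtype.ext (sigma_partition_prod_ext (Multiset.erase_cons_head _ _) rfl)
  right_inv y := Subtype.ext (Sigma.ext (Nat.Partition.ext (Multiset.cons_erase y.2.2)) HEq.rfl)

def conjPerm (n : ℕ) : Equiv.Perm n.Partition := Function.Involutive.toPerm conj conj_conj

def flatConjEquiv (r n : ℕ) :
    {x : Σ m : ℕ, m.Partition × ℕ // IsFlat r x.2.1 ∧ 1 ≤ x.2.2 ∧ x.1 + x.2.2 = n ∧
      part x.2.1 x.2.2 - part x.2.1 (x.2.2 + 1) < r - 1} ≃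
      {x : Σ m : ℕ, m.Partition × ℕ //
        IsRestricted r x.2.1 ∧ 0 < x.2.2 ∧ x.1 + x.2.2 = n ∧ x.2.1.parts.count x.2.2 < r - 1} :=
  Equiv.subtypeEquiv (Equiv.sigmaCongrRight fun m => (conjPerm m).prodCongr (Equiv.refl ℕ))
    fun ⟨m, μ, i⟩ => by
      change IsFlat r μ ∧ 0 < i ∧ m + i = n ∧ part μ i - part μ (i + 1) < r - 1 ↔
        IsRestricted r (conj μ) ∧ 0 < i ∧ m + i = n ∧ (conj μ).parts.count i < r - 1
      rw [← isFlat_iff_isRestricted_conj]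
      exact and_congr_right fun _ => and_congr_right fun hi => by rw [count_conj μ hi]

lemma sum_lDist_eq_card (n : ℕ) (P : n.Partition → Prop) :
    ∑ p ∈ Finset.univ.filter P, lDist p =
      Nat.card {y : Σ _ : n.Partition, ℕ // P y.1 ∧ y.2 ∈ y.1.parts} := by
  simp only [lDist]
  rw [← Finset.card_sigma, ← Nat.card_eq_finsetCard]
  exact Nat.card_congr (Equiv.subtypeEquivRight fun y => by simp)

theorem dist_restricted_eq_pairs_general (n r : ℕ) :
    (∑ p ∈ Finset.univ.filter (fun p : n.Partition => IsRestricted r p), lDist p) =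
      Nat.card {x : Σ m : ℕ, m.Partition × ℕ //
        IsFlat r x.2.1 ∧ 1 ≤ x.2.2 ∧ x.1 + x.2.2 = n ∧
          part x.2.1 x.2.2 - part x.2.1 (x.2.2 + 1) < r - 1} := by
  rw [sum_lDist_eq_card]
  exact (Nat.card_congr ((flatConjEquiv r n).trans (addPartEquiv r n))).symm

theorem dist_restricted_eq_pairs (n r : ℕ) (hr : 2 ≤ r) :
    (∑ p ∈ Finset.univ.filter (fun p : n.Partition => IsRestricted r p), lDist p) =
      Nat.card {x : Σ m : ℕ, m.Partition × ℕ //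
        IsFlat r x.2.1 ∧ 1 ≤ x.2.2 ∧ x.1 + x.2.2 = n ∧
          part x.2.1 x.2.2 - part x.2.1 (x.2.2 + 1) < r - 1} :=
  dist_restricted_eq_pairs_general n r

end BeckPaper
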